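/- Let L : ℝ → ℝ be a continuous nondecreasing function with L(u) = 0 for u ≤ 0, let b > 0, c > 0, n₀ > 0 and q ≥ 0. Set α := 1 + c and p := (1+q)·(1 + 1/c), define n(u) := n₀·(1 + (c/b)·L(u))^{−p} and m(u) := n₀ − n(u). Then for every t ≥ 0, ∫_{(0,t]} ( b + c·L(u) ) d(μ_m)(u) = (1+q)·α·∫_{(0,t]} n(u) d(μ_L)(u), both sides being equal to ( p/(p−1) )·n₀·b·( 1 − (1 + (c/b)·L(t))^{1−p} ). -/

import Mathlib

open Set MeasureTheory

/-!
Write `k = c / b` and `φ x = n₀ - n₀ (1 + k x) ^ (-p)`, so that `m = φ ∘ L`. Since `L` is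
continuous and monotone, it pushes `μ_m` on `(0, t]` forward to `μ_φ` on `(0, L t]`, and `μ_L` to
Lebesgue measure there, so both integrals become integrals in `x = L u`. On `(0, ∞)` the measure
`μ_φ` has density `φ' x = n₀ p k (1 + k x) ^ (-p - 1)`, and
`(b + c x) φ' x = p c n₀ (1 + k x) ^ (-p)` with `p c = (1 + q) α`. The closed form is the
elementary integral of `(1 + k x) ^ (-p)`, `p > 1`.
-/

theorem Monotone.exists_preimage_Iic_inter_Ioc_eq_Ioc {L : ℝ → ℝ} (hL : Monotone L)
    {a t z : ℝ} (hLc : ContinuousOn L (Icc a t)) (hat : a ≤ t) (hz : L a ≤ z) :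
    ∃ w, L w = min z (L t) ∧ L ⁻¹' Iic z ∩ Ioc a t = Ioc a w := by
  obtain ⟨u₀, hu₀, hLu₀⟩ : min z (L t) ∈ L '' Icc a t :=
    intermediate_value_Icc hat hLc ⟨le_min hz (hL hat), min_le_right _ _⟩
  have hK : IsCompact (Icc a t ∩ L ⁻¹' Iic (min z (L t))) :=
    isCompact_Icc.of_isClosed_subset
      (hLc.preimage_isClosed_of_isClosed isClosed_Icc isClosed_Iic) inter_subset_left
  obtain ⟨w, ⟨hw, hLw⟩, hw_max⟩ := hK.exists_isGreatest ⟨u₀, hu₀, hLu₀.le⟩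
  have hLw_eq : L w = min z (L t) := le_antisymm hLw (hLu₀ ▸ hL (hw_max ⟨hu₀, hLu₀.le⟩))
  refine ⟨w, hLw_eq, Set.ext fun u => ⟨fun ⟨hLu, hu⟩ => ⟨hu.1, ?_⟩, fun hu => ⟨?_, hu.1, ?_⟩⟩⟩
  · exact hw_max ⟨Ioc_subset_Icc_self hu, le_min hLu (hL hu.2)⟩
  · exact (hL hu.2).trans (hLw_eq ▸ min_le_left _ _)
  · exact hu.2.trans hw.2

theorem StieltjesFunction.map_restrict_Ioc_eq_of_comp (g h : StieltjesFunction ℝ) {L : ℝ → ℝ}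
    (hL : Monotone L) (hLc : Continuous L) (hh : ∀ u, h u = g (L u)) {a t : ℝ} (hat : a ≤ t) :
    (h.measure.restrict (Ioc a t)).map L = g.measure.restrict (Ioc (L a) (L t)) := by
  have : IsFiniteMeasure (h.measure.restrict (Ioc a t)) :=
    isFiniteMeasure_restrict.2 (by simp [StieltjesFunction.measure_Ioc])
  refine Measure.ext_of_Iic _ _ fun z => ?_
  rw [Measure.map_apply hLc.measurable measurableSet_Iic,
    Measure.restrict_apply (measurableSet_Iic.preimage hLc.measurable),
    Measure.restrict_apply measurableSet_Iic, inter_comm (Iic z), Ioc_inter_Iic]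
  rcases lt_or_ge z (L a) with hz | hz
  · have hempty : L ⁻¹' Iic z ∩ Ioc a t = ∅ :=
      eq_empty_of_forall_notMem fun u ⟨hLu, hu⟩ => hz.not_ge ((hL hu.1.le).trans hLu)
    rw [hempty, Ioc_eq_empty ((min_le_right _ _).trans hz.le).not_gt, measure_empty,
      measure_empty]
  · obtain ⟨w, hLw, hpre⟩ := hL.exists_preimage_Iic_inter_Ioc_eq_Ioc hLc.continuousOn hat hz
    rw [hpre, StieltjesFunction.measure_Ioc, StieltjesFunction.measure_Ioc, hh, hh, hLw,
      min_comm]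

theorem StieltjesFunction.setIntegral_Ioc_comp {E : Type*} [NormedAddCommGroup E]
    [NormedSpace ℝ E] (g h : StieltjesFunction ℝ) {L : ℝ → ℝ} (hL : Monotone L)
    (hLc : Continuous L) (hh : ∀ u, h u = g (L u)) {a t : ℝ} (hat : a ≤ t) {F : ℝ → E}
    (hF : AEStronglyMeasurable F (g.measure.restrict (Ioc (L a) (L t)))) :
    ∫ u in Ioc a t, F (L u) ∂h.measure = ∫ x in Ioc (L a) (L t), F x ∂g.measure := by
  rw [← g.map_restrict_Ioc_eq_of_comp h hL hLc hh hat] at hF ⊢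
  exact (integral_map hLc.aemeasurable hF).symm

theorem StieltjesFunction.setIntegral_Ioc_comp_self {E : Type*} [NormedAddCommGroup E]
    [NormedSpace ℝ E] (L : StieltjesFunction ℝ) (hLc : Continuous L) {a t : ℝ} (hat : a ≤ t)
    {F : ℝ → E} (hF : AEStronglyMeasurable F (volume.restrict (Ioc (L a) (L t)))) :
    ∫ u in Ioc a t, F (L u) ∂L.measure = ∫ x in L a..L t, F x := by
  rw [Real.volume_eq_stieltjes_id] at hF
  rw [StieltjesFunction.id.setIntegral_Ioc_comp L L.mono hLc (fun _ => rfl) hat hF,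
    ← Real.volume_eq_stieltjes_id, intervalIntegral.integral_of_le (L.mono hat)]

theorem StieltjesFunction.ae_restrict_Ioc_deriv_nonneg (g : StieltjesFunction ℝ) {g' : ℝ → ℝ}
    {a b : ℝ} (hderiv : ∀ x ∈ Ioo a b, HasDerivAt g (g' x) x) :
    ∀ᵐ x ∂volume.restrict (Ioc a b), 0 ≤ g' x := by
  rw [← Measure.restrict_congr_set Ioo_ae_eq_Ioc, ae_restrict_iff' measurableSet_Ioo]
  exact Filter.Eventually.of_forall fun x hx => (hderiv x hx).nonneg_of_monotone g.mono

theorem StieltjesFunction.restrict_Ioc_eq_withDensity (g : StieltjesFunction ℝ) {g' : ℝ → ℝ}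
    {a b : ℝ} (hg : ContinuousOn g (Icc a b)) (hderiv : ∀ x ∈ Ioo a b, HasDerivAt g (g' x) x)
    (hint : IntegrableOn g' (Ioc a b)) :
    g.measure.restrict (Ioc a b) =
      (volume.restrict (Ioc a b)).withDensity fun x => ENNReal.ofReal (g' x) := by
  refine Measure.ext_of_Ioc' _ _ (fun x y _ => ?_) (fun x y _ => ?_)
  · rw [Measure.restrict_apply measurableSet_Ioc, Ioc_inter_Ioc, StieltjesFunction.measure_Ioc]
    exact ENNReal.ofReal_ne_top
  rw [Measure.restrict_apply measurableSet_Ioc, withDensity_apply _ measurableSet_Ioc,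
    Measure.restrict_restrict measurableSet_Ioc, Ioc_inter_Ioc]
  set X := max x a
  set Y := min y b
  rcases le_or_gt Y X with hYX | hXY
  · simp [Ioc_eq_empty hYX.not_gt]
  have hsub : Ioc X Y ⊆ Ioc a b := Ioc_subset_Ioc (le_max_right _ _) (min_le_right _ _)
  have hint' : IntegrableOn g' (Ioc X Y) := hint.mono_set hsub
  rw [StieltjesFunction.measure_Ioc, ← ofReal_integral_eq_lintegral_ofReal hint'
      (ae_restrict_of_ae_restrict_of_subset hsub (g.ae_restrict_Ioc_deriv_nonneg hderiv)),
    ← intervalIntegral.integral_of_le hXY.le,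
    intervalIntegral.integral_eq_sub_of_hasDerivAt_of_le hXY.le
      (hg.mono (Icc_subset_Icc (le_max_right _ _) (min_le_right _ _)))
      (fun u hu => hderiv u (Ioo_subset_Ioo (le_max_right _ _) (min_le_right _ _) hu))
      ((intervalIntegrable_iff_integrableOn_Ioc_of_le hXY.le).2 hint')]

theorem StieltjesFunction.setIntegral_Ioc_eq_setIntegral_deriv_smul {E : Type*}
    [NormedAddCommGroup E] [NormedSpace ℝ E] (g : StieltjesFunction ℝ) {g' : ℝ → ℝ} {a b : ℝ}
    (hg : ContinuousOn g (Icc a b)) (hderiv : ∀ x ∈ Ioo a b, HasDerivAt g (g' x) x)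
    (hint : IntegrableOn g' (Ioc a b)) (F : ℝ → E) :
    ∫ x in Ioc a b, F x ∂g.measure = ∫ x in Ioc a b, g' x • F x := by
  rw [g.restrict_Ioc_eq_withDensity hg hderiv hint]
  refine (integral_withDensity_eq_integral_smul₀ hint.aemeasurable.real_toNNReal F).trans ?_
  refine integral_congr_ae ((g.ae_restrict_Ioc_deriv_nonneg hderiv).mono fun x hx => ?_)
  simp only [NNReal.smul_def, Real.coe_toNNReal _ hx]

theorem integral_one_add_mul_rpow {k r s : ℝ} (hk : k ≠ 0) (hks : 0 < 1 + k * s) (hr : r ≠ -1) :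
    ∫ x in (0:ℝ)..s, (1 + k * x) ^ r = ((1 + k * s) ^ (r + 1) - 1) / (k * (r + 1)) := by
  have hr' : r + 1 ≠ 0 := fun h => hr (by linarith)
  calc ∫ x in (0:ℝ)..s, (1 + k * x) ^ r = k⁻¹ • ∫ y in k * 0 + 1..k * s + 1, y ^ r := by
        simpa only [add_comm] using intervalIntegral.integral_comp_mul_add (· ^ r) hk 1
    _ = ((1 + k * s) ^ (r + 1) - 1) / (k * (r + 1)) := by
        rw [integral_rpow (Or.inr ⟨hr, notMem_uIcc_of_lt (by linarith) (by linarith)⟩)]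
        simp only [mul_zero, zero_add, Real.one_rpow, smul_eq_mul]
        field_simp
        ring_nf

lemma one_add_mul_max_pos {k : ℝ} (hk : 0 ≤ k) (x : ℝ) : 0 < 1 + k * max x 0 := by
  have := mul_nonneg hk (le_max_right x 0)
  linarith

lemma continuous_sub_mul_one_add_mul_max_rpow (n₀ p : ℝ) {k : ℝ} (hk : 0 ≤ k) :
    Continuous fun x => n₀ - n₀ * (1 + k * max x 0) ^ (-p) :=
  continuous_const.sub (continuous_const.mul ((by fun_prop : Continuous fun x =>
    1 + k * max x 0).rpow_const fun x => Or.inl (one_add_mul_max_pos hk x).ne'))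

/-- `m = rpowNegStieltjes n₀ (c / b) p ∘ L` in the theorem; the `max` extends
`x ↦ n₀ - n₀ (1 + k x) ^ (-p)` monotonically to `x < 0`. -/
noncomputable def rpowNegStieltjes (n₀ k p : ℝ) (hn₀ : 0 ≤ n₀) (hk : 0 ≤ k) (hp : 0 ≤ p) :
    StieltjesFunction ℝ where
  toFun x := n₀ - n₀ * (1 + k * max x 0) ^ (-p)
  mono' x y hxy := by
    have hbase : 1 + k * max x 0 ≤ 1 + k * max y 0 := by gcongr
    have := Real.rpow_le_rpow_of_nonpos (one_add_mul_max_pos hk x) hbase (neg_nonpos.2 hp)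
    dsimp only
    nlinarith
  right_continuous' _ := (continuous_sub_mul_one_add_mul_max_rpow n₀ p hk).continuousWithinAt

lemma rpowNegStieltjes_apply_of_nonneg {n₀ k p : ℝ} (hn₀ : 0 ≤ n₀) (hk : 0 ≤ k) (hp : 0 ≤ p)
    {x : ℝ} (hx : 0 ≤ x) : rpowNegStieltjes n₀ k p hn₀ hk hp x = n₀ - n₀ * (1 + k * x) ^ (-p) := by
  simp [rpowNegStieltjes, max_eq_left hx]

lemma hasDerivAt_rpowNegStieltjes {n₀ k p : ℝ} (hn₀ : 0 ≤ n₀) (hk : 0 ≤ k) (hp : 0 ≤ p) {x : ℝ}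
    (hx : 0 < x) : HasDerivAt (rpowNegStieltjes n₀ k p hn₀ hk hp)
      (n₀ * p * k * (1 + k * x) ^ (-p - 1)) x := by
  have hbase : HasDerivAt (fun y => 1 + k * y) k x := by
    simpa using ((hasDerivAt_id x).const_mul k).const_add 1
  have hpos : 0 < 1 + k * x := by simpa [max_eq_left hx.le] using one_add_mul_max_pos hk x
  have h := ((hbase.rpow_const (p := -p) (Or.inl hpos.ne')).const_mul n₀).const_sub n₀
  refine (h.congr_of_eventuallyEq ?_).congr_deriv (by ring)
  filter_upwards [lt_mem_nhds hx] with y hy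
  exact rpowNegStieltjes_apply_of_nonneg hn₀ hk hp hy.le

lemma setIntegral_Ioc_rpowNegStieltjes {n₀ k p : ℝ} (hn₀ : 0 ≤ n₀) (hk : 0 ≤ k) (hp : 0 ≤ p)
    (s : ℝ) (F : ℝ → ℝ) :
    ∫ x in Ioc 0 s, F x ∂(rpowNegStieltjes n₀ k p hn₀ hk hp).measure =
      ∫ x in Ioc 0 s, n₀ * p * k * (1 + k * x) ^ (-p - 1) * F x := by
  have hcont : ContinuousOn (fun x => n₀ * p * k * (1 + k * x) ^ (-p - 1)) (Icc 0 s) :=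
    continuousOn_const.mul ((by fun_prop : Continuous fun x => 1 + k * x).continuousOn.rpow_const
      fun x hx => Or.inl (by nlinarith [hx.1] : (0:ℝ) < 1 + k * x).ne')
  exact StieltjesFunction.setIntegral_Ioc_eq_setIntegral_deriv_smul _
    (continuous_sub_mul_one_add_mul_max_rpow n₀ p hk).continuousOn
    (fun x hx => hasDerivAt_rpowNegStieltjes hn₀ hk hp hx.1)
    (hcont.integrableOn_Icc.mono_set Ioc_subset_Icc_self) F

lemma setIntegral_Ioc_affine_rpowNegStieltjes {b c n₀ p : ℝ} (hb : 0 < b) (hc : 0 < c)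
    (hn₀ : 0 ≤ n₀) (hp : 0 ≤ p) {s : ℝ} (hs : 0 ≤ s) :
    ∫ x in Ioc 0 s, (b + c * x) ∂(rpowNegStieltjes n₀ (c / b) p hn₀ (by positivity) hp).measure =
      n₀ * p * c * ∫ x in (0:ℝ)..s, (1 + c / b * x) ^ (-p) := by
  rw [setIntegral_Ioc_rpowNegStieltjes, ← intervalIntegral.integral_of_le hs,
    ← intervalIntegral.integral_const_mul]
  refine intervalIntegral.integral_congr fun x hx => ?_
  have hpos : 0 < 1 + c / b * x := by
    rw [uIcc_of_le hs] at hx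
    have := div_pos hc hb
    nlinarith [hx.1]
  have hbx : b + c * x = b * (1 + c / b * x) := by field_simp
  rw [Real.rpow_sub_one hpos.ne', hbx]
  generalize 1 + c / b * x = y at hpos ⊢
  field_simp

/-- Zero-sum constraint in the presence of an arbitrager: with `L` continuous
nondecreasing, `L = 0` on `(-∞,0]`, `α = 1 + c`, `p = (1+q)(1+1/c)`,
`n(u) = n₀ (1 + (c/b) L(u))^{-p}` and `m = n₀ - n`,
`∫_{(0,t]} (b + c L(u)) dm(u) = (1+q) α ∫_{(0,t]} n(u) dL(u)`,
both sides being equal to `(p/(p-1)) n₀ b (1 - (1 + (c/b) L(t))^{1-p})`. -/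
theorem stmt12 (L : StieltjesFunction ℝ) (hLc : Continuous L)
    (hL0 : ∀ u : ℝ, u ≤ 0 → L u = 0)
    (b c n₀ q : ℝ) (hb : 0 < b) (hc : 0 < c) (hn₀ : 0 < n₀) (hq : 0 ≤ q)
    (α p : ℝ) (hα : α = 1 + c) (hp : p = (1 + q) * (1 + 1 / c))
    (m : StieltjesFunction ℝ)
    (hm : ∀ u : ℝ, m u = n₀ - n₀ * (1 + (c / b) * L u) ^ (-p)) :
    ∀ t : ℝ, 0 ≤ t →
      (∫ u in Set.Ioc (0:ℝ) t, (b + c * L u) ∂m.measure)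
          = (1 + q) * α *
            ∫ u in Set.Ioc (0:ℝ) t, n₀ * (1 + (c / b) * L u) ^ (-p) ∂L.measure
        ∧
      (∫ u in Set.Ioc (0:ℝ) t, (b + c * L u) ∂m.measure)
          = (p / (p - 1)) * n₀ * b * (1 - (1 + (c / b) * L t) ^ (1 - p)) := by
  intro t ht
  have hL0' : L 0 = 0 := hL0 0 le_rfl
  have hLnn (u : ℝ) : 0 ≤ L u :=
    (hL0 _ (min_le_right u 0)).symm.le.trans (L.mono (min_le_left u 0))
  have hk : 0 < c / b := div_pos hc hb
  have hpc : p * c = (1 + q) * α := by rw [hp, hα]; field_simp; ring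
  have hp1 : 1 < p := by rw [hp]; nlinarith [one_div_pos.2 hc]
  set φ := rpowNegStieltjes n₀ (c / b) p hn₀.le hk.le (by linarith)
  have hmφ (u : ℝ) : m u = φ (L u) := by rw [hm, rpowNegStieltjes_apply_of_nonneg _ _ _ (hLnn u)]
  set J := ∫ x in (0:ℝ)..L t, (1 + c / b * x) ^ (-p)
  have hLHS : ∫ u in Ioc 0 t, (b + c * L u) ∂m.measure = n₀ * p * c * J := by
    rw [φ.setIntegral_Ioc_comp m L.mono hLc hmφ ht
      (by fun_prop : Measurable fun x => b + c * x).aestronglyMeasurable, hL0',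
      setIntegral_Ioc_affine_rpowNegStieltjes hb hc hn₀.le _ (hLnn t)]
  have hRHS : ∫ u in Ioc 0 t, n₀ * (1 + c / b * L u) ^ (-p) ∂L.measure = n₀ * J := by
    rw [L.setIntegral_Ioc_comp_self hLc ht
      (by fun_prop : Measurable fun x => n₀ * (1 + c / b * x) ^ (-p)).aestronglyMeasurable,
      hL0', intervalIntegral.integral_const_mul]
  have hJ : J = ((1 + c / b * L t) ^ (-p + 1) - 1) / (c / b * (-p + 1)) :=
    integral_one_add_mul_rpow hk.ne' (by nlinarith [hLnn t]) fun h => hp1.ne' (neg_inj.1 h)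
  refine ⟨by rw [hLHS, hRHS, ← hpc]; ring, ?_⟩
  have hp1' : p - 1 ≠ 0 := by linarith
  rw [hLHS, hJ, neg_add_eq_sub, ← neg_sub p 1]
  field_simp
  ring
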